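/- arXiv:1810.11162 — 3 statements merged into one kernel-verified Lean document; each statement's English description precedes it below -/
import Mathlib

section
/- Let N ≤ M and let μ : Fin N → Fin M → ℝ be positive. Define J(a) = Σ_n μ(n, a(n))·η_{a(n)}(a). If two profiles ã ≠ a* are both maximizers of J, then both are injective, and Σ_n μ(n, ã(n)) = Σ_n μ(n, a*(n)) while ã(m) ≠ a*(m) for at least one player m. -/
open Finset

/-- No-collision indicator: 1 if exactly one player chooses arm `i`, else 0. -/
def eta {N M : ℕ} (a : Fin N → Fin M) (i : Fin M) : ℝ :=
  if (Finset.univ.filter fun n => a n = i).card = 1 then 1 else 0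

/-- Objective: sum of expected rewards with collisions zeroed out. -/
def obj {N M : ℕ} (μ : Fin N → Fin M → ℝ) (a : Fin N → Fin M) : ℝ :=
  ∑ n, μ n (a n) * eta a (a n)

lemma eta_nonneg {N M : ℕ} (a : Fin N → Fin M) (i : Fin M) : 0 ≤ eta a i := by
  unfold eta; split <;> norm_num

lemma eta_eq_one_of_inj {N M : ℕ} {a : Fin N → Fin M} (ha : Function.Injective a)
    (n : Fin N) : eta a (a n) = 1 := by
  unfold eta
  rw [if_pos]
  have h : (Finset.univ.filter fun m => a m = a n) = {n} := by
    ext m; simp [ha.eq_iff]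
  rw [h]; simp

lemma obj_eq_of_inj {N M : ℕ} (μ : Fin N → Fin M → ℝ) {a : Fin N → Fin M}
    (ha : Function.Injective a) : obj μ a = ∑ n, μ n (a n) := by
  unfold obj
  refine Finset.sum_congr rfl fun n _ => ?_
  rw [eta_eq_one_of_inj ha, mul_one]

lemma eta_eq_zero_of_collision {N M : ℕ} {a : Fin N → Fin M} {n1 n2 : Fin N}
    (hne : n1 ≠ n2) (heq : a n1 = a n2) : eta a (a n1) = 0 := by
  unfold eta
  rw [if_neg]
  intro h
  have hsub : ({n1, n2} : Finset (Fin N)) ⊆ Finset.univ.filter fun m => a m = a n1 := by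
    intro m hm
    simp only [Finset.mem_insert, Finset.mem_singleton] at hm
    rcases hm with rfl | rfl <;> simp [heq]
  have h2 : ({n1, n2} : Finset (Fin N)).card = 2 := Finset.card_pair hne
  have := Finset.card_le_card hsub
  omega

lemma maximizer_inj {N M : ℕ} (hNM : N ≤ M) (μ : Fin N → Fin M → ℝ)
    (hpos : ∀ n i, 0 < μ n i) (a : Fin N → Fin M)
    (hmax : ∀ b, obj μ b ≤ obj μ a) : Function.Injective a := by
  by_contra hinj
  rw [Function.not_injective_iff] at hinj
  obtain ⟨n1, n2, heq, hne⟩ := hinj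
  -- find an unused arm i
  have himg : (Finset.univ.image a).card < M := by
    have h1 : (Finset.univ.image a) = ((Finset.univ.erase n2).image a) := by
      apply Finset.Subset.antisymm
      · intro j hj
        simp only [Finset.mem_image] at hj ⊢
        obtain ⟨n, _, rfl⟩ := hj
        by_cases h : n = n2
        · exact ⟨n1, Finset.mem_erase.2 ⟨hne, Finset.mem_univ _⟩, by rw [h, ← heq]⟩
        · exact ⟨n, Finset.mem_erase.2 ⟨h, Finset.mem_univ _⟩, rfl⟩
      · exact Finset.image_subset_image (Finset.erase_subset _ _)
    have h2 : ((Finset.univ.erase n2).image a).card ≤ (Finset.univ.erase n2).card :=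
      Finset.card_image_le
    have h3 : (Finset.univ.erase n2).card = N - 1 := by
      rw [Finset.card_erase_of_mem (Finset.mem_univ _)]
      simp
    have hN : 0 < N := n1.pos
    rw [h1]
    omega
  have hex : ∃ i : Fin M, i ∉ Finset.univ.image a := by
    by_contra h
    push_neg at h
    have : (Finset.univ : Finset (Fin M)) ⊆ Finset.univ.image a := fun i _ => h i
    have := Finset.card_le_card this
    simp at this
    omega
  obtain ⟨i, hi⟩ := hex
  have hiarm : ∀ n, a n ≠ i := by
    intro n hn
    exact hi (Finset.mem_image.2 ⟨n, Finset.mem_univ _, hn⟩)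
  set b := Function.update a n1 i with hb
  have hbn1 : b n1 = i := Function.update_self _ _ _
  have hbn : ∀ n, n ≠ n1 → b n = a n := fun n hn => Function.update_of_ne hn _ _
  have hetab : eta b i = 1 := by
    unfold eta
    rw [if_pos]
    have h : (Finset.univ.filter fun m => b m = i) = {n1} := by
      ext m
      simp only [Finset.mem_filter, Finset.mem_univ, true_and, Finset.mem_singleton]
      constructor
      · intro hm
        by_contra hm1
        rw [hbn m hm1] at hm
        exact hiarm m hm
      · rintro rfl; exact hbn1
    rw [h]; simp
  have hlt : obj μ a < obj μ b := by
    unfold obj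
    apply Finset.sum_lt_sum
    · intro n _
      by_cases hn1 : n = n1
      · subst hn1
        rw [eta_eq_zero_of_collision hne heq, mul_zero, hbn1, hetab, mul_one]
        exact (hpos _ i).le
      · rw [hbn n hn1]
        by_cases hcol : a n = a n1
        · rw [hcol, eta_eq_zero_of_collision hne heq, mul_zero]
          exact mul_nonneg (hpos n _).le (eta_nonneg _ _)
        · have hfilt : (Finset.univ.filter fun m => b m = a n)
              = Finset.univ.filter fun m => a m = a n := by
            ext m
            simp only [Finset.mem_filter, Finset.mem_univ, true_and]
            by_cases hm : m = n1
            · subst hm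
              rw [hbn1]
              constructor
              · intro h; exact absurd h.symm (hiarm n)
              · intro h; exact absurd h.symm hcol
            · rw [hbn m hm]
          unfold eta
          rw [hfilt]
    · refine ⟨n1, Finset.mem_univ _, ?_⟩
      rw [eta_eq_zero_of_collision hne heq, mul_zero, hbn1, hetab, mul_one]
      exact hpos n1 i
  exact absurd (hmax b) (not_le.2 hlt)

theorem two_maximizers_structure {N M : ℕ} (hNM : N ≤ M)
    (μ : Fin N → Fin M → ℝ) (hpos : ∀ n i, 0 < μ n i)
    (atil astar : Fin N → Fin M) (hne : atil ≠ astar)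
    (hmax1 : ∀ b, obj μ b ≤ obj μ atil) (hmax2 : ∀ b, obj μ b ≤ obj μ astar) :
    Function.Injective atil ∧ Function.Injective astar ∧
      (∑ n, μ n (atil n)) = (∑ n, μ n (astar n)) ∧
      ∃ m, atil m ≠ astar m := by
  have h1 : Function.Injective atil := maximizer_inj hNM μ hpos atil hmax1
  have h2 : Function.Injective astar := maximizer_inj hNM μ hpos astar hmax2
  refine ⟨h1, h2, ?_, ?_⟩
  · have := le_antisymm (hmax1 astar) (hmax2 atil)
    rw [obj_eq_of_inj μ h1, obj_eq_of_inj μ h2] at this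
    exact this.symm
  · exact Function.ne_iff.1 hne
end

section
/- Let 0 < η < 1/2 and π* > 1/(2(1−η)). Let S₁,…,S_J be independent random variables with 0 ≤ S_i ≤ ℓ_i and P(S_i ≤ (1−η)·π*·ℓ_i) ≤ A_i·exp(−β·η²·π*·ℓ_i) for constants A_i ≥ 0 and β > 0. Then for t = β·η²/(1−η), P(Σ_i S_i ≤ (1/2)·Σ_i ℓ_i) ≤ (Π_i (1 + A_i)) · exp(−β·η²·(π* − 1/(2(1−η)))·Σ_i ℓ_i). -/
/-!
Chernoff's bound with a negative exponent `t = -βη²/(1-η)`. For a single phase, split on whether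
`S_i ≤ c_i := (1-η)π*ℓ_i`: on that event `exp (t S_i) ≤ 1`, off it `exp (t S_i) ≤ exp (t c_i)`,
and `t c_i = -βη²π*ℓ_i`, so `E[exp (t S_i)] ≤ (1 + A_i) exp (-βη²π*ℓ_i)`. Independence multiplies
these bounds, and Markov's inequality at level `Σℓ_i / 2` contributes the factor
`exp (βη² Σℓ_i / (2(1-η)))`.
-/

open MeasureTheory ProbabilityTheory Real Finset

namespace ProbabilityTheory

variable {Ω ι : Type*} [MeasurableSpace Ω] {μ : Measure Ω} {X : Ω → ℝ} {t : ℝ}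

lemma integrable_exp_mul_of_nonpos_of_nonneg [IsFiniteMeasure μ] (hX : AEMeasurable X μ)
    (hX0 : ∀ᵐ ω ∂μ, 0 ≤ X ω) (ht : t ≤ 0) :
    Integrable (fun ω ↦ exp (t * X ω)) μ := by
  refine .of_mem_Icc 0 1 (measurable_exp.comp_aemeasurable (hX.const_mul t)) ?_
  filter_upwards [hX0] with ω hω
  exact ⟨(exp_pos _).le, exp_le_one_iff.2 (mul_nonpos_of_nonpos_of_nonneg ht hω)⟩

lemma mgf_le_measureReal_le_add_exp [IsProbabilityMeasure μ] (hX : Measurable X)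
    (hX0 : ∀ᵐ ω ∂μ, 0 ≤ X ω) (ht : t ≤ 0) (c : ℝ) :
    mgf X μ t ≤ μ.real {ω | X ω ≤ c} + exp (t * c) := by
  have hc : MeasurableSet {ω | X ω ≤ c} := measurableSet_le hX measurable_const
  have hind : Integrable ({ω | X ω ≤ c}.indicator (1 : Ω → ℝ)) μ :=
    (integrable_const 1).indicator hc
  have hpointwise : ∀ᵐ ω ∂μ, exp (t * X ω) ≤ {ω | X ω ≤ c}.indicator 1 ω + exp (t * c) := by
    filter_upwards [hX0] with ω hω
    by_cases hωc : X ω ≤ c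
    · have : exp (t * X ω) ≤ 1 := exp_le_one_iff.2 (mul_nonpos_of_nonpos_of_nonneg ht hω)
      simp only [Set.indicator_of_mem (show ω ∈ {ω | X ω ≤ c} from hωc), Pi.one_apply]
      linarith [exp_pos (t * c)]
    · have : exp (t * X ω) ≤ exp (t * c) :=
        exp_le_exp.2 (mul_le_mul_of_nonpos_left (not_le.1 hωc).le ht)
      simpa [Set.indicator_of_notMem (show ω ∉ {ω | X ω ≤ c} from hωc)]
  calc mgf X μ t
      ≤ ∫ ω, ({ω | X ω ≤ c}.indicator 1 ω + exp (t * c)) ∂μ :=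
        integral_mono_ae (integrable_exp_mul_of_nonpos_of_nonneg hX.aemeasurable hX0 ht)
          (hind.add (integrable_const _)) hpointwise
    _ = μ.real {ω | X ω ≤ c} + exp (t * c) := by
        rw [integral_add hind (integrable_const _), integral_indicator_one hc, integral_const,
          probReal_univ, one_smul]

lemma measureReal_sum_le_le_exp_mul_prod {X : ι → Ω → ℝ} (hindep : iIndepFun X μ)
    (hX : ∀ i, Measurable (X i)) {s : Finset ι}
    (hint : ∀ i ∈ s, Integrable (fun ω ↦ exp (t * X i ω)) μ) (ht : t ≤ 0) {B : ι → ℝ}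
    (hB : ∀ i ∈ s, mgf (X i) μ t ≤ B i) (a : ℝ) :
    μ.real {ω | ∑ i ∈ s, X i ω ≤ a} ≤ exp (-t * a) * ∏ i ∈ s, B i := by
  have := hindep.isProbabilityMeasure
  have hchernoff := measure_le_le_exp_mul_mgf a ht (hindep.integrable_exp_mul_sum hX hint)
  rw [hindep.mgf_sum hX] at hchernoff
  simp only [Finset.sum_apply] at hchernoff
  exact hchernoff.trans <| mul_le_mul_of_nonneg_left
    (prod_le_prod (fun _ _ ↦ mgf_nonneg) hB) (exp_pos _).le

end ProbabilityTheory

theorem chernoff_phase_combination_general {Ω : Type*} [MeasurableSpace Ω]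
    (Pm : Measure Ω) [IsProbabilityMeasure Pm]
    {J : ℕ} (S : Fin J → Ω → ℝ) (hmeas : ∀ i, Measurable (S i))
    (hindep : iIndepFun S Pm)
    (ℓ : Fin J → ℝ)
    (hbound : ∀ i ω, 0 ≤ S i ω ∧ S i ω ≤ ℓ i)
    (η πs β : ℝ) (hη : η < 1 / 2)
    (hβ : 0 < β)
    (A : Fin J → ℝ) (hA : ∀ i, 0 ≤ A i)
    (htail : ∀ i, Pm {ω | S i ω ≤ (1 - η) * πs * ℓ i} ≤
      ENNReal.ofReal (A i * Real.exp (-β * η ^ 2 * πs * ℓ i))) :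
    Pm {ω | ∑ i, S i ω ≤ (1 / 2) * ∑ i, ℓ i} ≤
      ENNReal.ofReal ((∏ i, (1 + A i)) *
        Real.exp (-β * η ^ 2 * (πs - 1 / (2 * (1 - η))) * ∑ i, ℓ i)) := by
  have hη1 : 0 < 1 - η := by linarith
  set t := -(β * η ^ 2 / (1 - η))
  have ht : t ≤ 0 := neg_nonpos.2 (by positivity)
  have hS0 i : ∀ᵐ ω ∂Pm, 0 ≤ S i ω := .of_forall fun ω ↦ (hbound i ω).1
  have hphase i : mgf (S i) Pm t ≤ (1 + A i) * exp (-β * η ^ 2 * πs * ℓ i) := by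
    have htc : t * ((1 - η) * πs * ℓ i) = -β * η ^ 2 * πs * ℓ i := by
      simp only [t]; field_simp
    calc mgf (S i) Pm t
        ≤ Pm.real {ω | S i ω ≤ (1 - η) * πs * ℓ i} + exp (-β * η ^ 2 * πs * ℓ i) := by
          rw [← htc]; exact mgf_le_measureReal_le_add_exp (hmeas i) (hS0 i) ht _
      _ ≤ A i * exp (-β * η ^ 2 * πs * ℓ i) + exp (-β * η ^ 2 * πs * ℓ i) := by
          gcongr
          exact ENNReal.toReal_le_of_le_ofReal (by have := hA i; positivity) (htail i)
      _ = (1 + A i) * exp (-β * η ^ 2 * πs * ℓ i) := by ring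
  have hchernoff := measureReal_sum_le_le_exp_mul_prod hindep hmeas (s := univ)
    (fun i _ ↦ integrable_exp_mul_of_nonpos_of_nonneg (hmeas i).aemeasurable (hS0 i) ht) ht
    (fun i _ ↦ hphase i) ((1 / 2) * ∑ i, ℓ i)
  rw [← ofReal_measureReal]
  refine ENNReal.ofReal_le_ofReal (hchernoff.trans_eq ?_)
  rw [prod_mul_distrib, ← exp_sum, ← mul_sum, mul_left_comm, ← exp_add]
  congr 2
  simp only [t]
  field_simp
  ring

theorem chernoff_phase_combination {Ω : Type*} [MeasurableSpace Ω]
    (Pm : Measure Ω) [IsProbabilityMeasure Pm]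
    {J : ℕ} (S : Fin J → Ω → ℝ) (hmeas : ∀ i, Measurable (S i))
    (hindep : iIndepFun S Pm)
    (ℓ : Fin J → ℝ)
    (hbound : ∀ i ω, 0 ≤ S i ω ∧ S i ω ≤ ℓ i)
    (η πs β : ℝ) (hη0 : 0 < η) (hη : η < 1 / 2)
    (hπ : 1 / (2 * (1 - η)) < πs) (hβ : 0 < β)
    (A : Fin J → ℝ) (hA : ∀ i, 0 ≤ A i)
    (htail : ∀ i, Pm {ω | S i ω ≤ (1 - η) * πs * ℓ i} ≤
      ENNReal.ofReal (A i * Real.exp (-β * η ^ 2 * πs * ℓ i))) :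
    Pm {ω | ∑ i, S i ω ≤ (1 / 2) * ∑ i, ℓ i} ≤
      ENNReal.ofReal ((∏ i, (1 + A i)) *
        Real.exp (-β * η ^ 2 * (πs - 1 / (2 * (1 - η))) * ∑ i, ℓ i)) :=
  chernoff_phase_combination_general Pm S hmeas hindep ℓ hbound η πs β hη hβ A hA htail
end

section
/- Consider an irreducible finite Markov chain on state space Z with transition probabilities P. For z ∈ Z, let G(z) be the set of spanning trees of the complete directed graph on Z rooted at z (every vertex other than z has exactly one outgoing edge and every vertex has a directed path to z), and define Q(z) = Σ_{g ∈ G(z)} Π_{(z'→z'') ∈ g} P(z', z''). Then π(z) = Q(z) / Σ_{z' ∈ Z} Q(z') defines a stationary distribution of the chain: Σ_{z'} π(z')·P(z', z) = π(z) for all z. -/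
/-!
Fix `z` and consider the maps `h : Z → Z`, weighted by `∏ v, P v (h v)`, under which every
vertex reaches `z` but `z` is not fixed: their functional graph is a single cycle through `z`
with trees hanging off it. Cutting the edge out of `z` turns such a map into a tree rooted at
`z` together with an edge `z → c`, `c ≠ z`; cutting instead the edge into `z` along the cycle
turns it into a tree rooted at some `a ≠ z` together with the edge `a → z`. Both cuttings are
weight-preserving bijections, so `∑_{a ≠ z} Q a * P a z = ∑_{c ≠ z} Q z * P z c`; adding the
term `Q z * P z z` to both sides gives `∑_a Q a * P a z = Q z * ∑_c P z c = Q z`.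
-/

open Finset Function

namespace Function

variable {α : Type*} {f : α → α}

theorem iterate_eq_iterate_of_apply_eq {x : α} {m n : ℕ}
    (hn : f (f^[n] x) = x) (hm : f (f^[m] x) = x) : f^[n] x = f^[m] x :=
  calc f^[n] x = f^[n] (f^[m + 1] x) := by rw [iterate_succ_apply', hm]
    _ = f^[m] (f^[n + 1] x) := by
      rw [← iterate_add_apply, ← iterate_add_apply, Nat.add_left_comm, ← Nat.add_assoc]
    _ = f^[m] x := by rw [iterate_succ_apply', hn]

theorem exists_iterate_update_eq [DecidableEq α] {a r : α} (c : α) {n : ℕ}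
    (h : f^[n] a = r) : ∃ m, (update f r c)^[m] a = r := by
  induction n generalizing a with
  | zero => exact ⟨0, h⟩
  | succ n ih =>
    by_cases har : a = r
    · exact ⟨0, har⟩
    · obtain ⟨m, hm⟩ := ih (by rwa [iterate_succ_apply] at h)
      exact ⟨m + 1, by rwa [iterate_succ_apply, update_of_ne har]⟩

end Function

section RootedMaps

variable {Z : Type*}

/-- `f` encodes a spanning tree rooted at `r`: the edges are `v → f v` for `v ≠ r`. -/
def IsRootedTree (f : Z → Z) (r : Z) : Prop :=
  f r = r ∧ ∀ v, ∃ n, f^[n] v = r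

def IsRootedUnicycle (h : Z → Z) (r : Z) : Prop :=
  h r ≠ r ∧ ∀ v, ∃ n, h^[n] v = r

variable {f h : Z → Z} {a c z : Z}

theorem IsRootedTree.apply_ne_self (hf : IsRootedTree f a) (hz : z ≠ a) : f z ≠ z := by
  intro hfz
  obtain ⟨n, hn⟩ := hf.2 z
  exact hz (by rwa [iterate_fixed hfz] at hn)

variable [DecidableEq Z]

theorem isRootedTree_update_self (h : ∀ v, ∃ n, f^[n] v = a) :
    IsRootedTree (update f a a) a :=
  ⟨update_self .., fun v => (h v).elim fun _ hn => exists_iterate_update_eq a hn⟩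

theorem IsRootedTree.isRootedUnicycle_update_root (hf : IsRootedTree f z) (hc : c ≠ z) :
    IsRootedUnicycle (update f z c) z :=
  ⟨by rwa [update_self], fun v => (hf.2 v).elim fun _ hn => exists_iterate_update_eq c hn⟩

theorem IsRootedTree.isRootedUnicycle_update (hf : IsRootedTree f a) (ha : a ≠ z) :
    IsRootedUnicycle (update f a z) z := by
  refine ⟨by rw [update_of_ne ha.symm]; exact hf.apply_ne_self ha.symm, fun v => ?_⟩
  obtain ⟨n, hn⟩ := hf.2 v
  obtain ⟨m, hm⟩ := exists_iterate_update_eq z hn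
  exact ⟨m + 1, by rw [iterate_succ_apply', hm, update_self]⟩

theorem IsRootedUnicycle.exists_pred (hh : IsRootedUnicycle h z) :
    ∃ a, a ≠ z ∧ h a = z ∧ IsRootedTree (update h a a) a := by
  obtain ⟨n, hn⟩ := hh.2 (h z)
  have hpred : h (h^[n] z) = z := by rwa [← iterate_succ_apply' h n, iterate_succ_apply]
  have hne : h^[n] z ≠ z := fun he => hh.1 (by rwa [he] at hpred)
  refine ⟨h^[n] z, hne, hpred, isRootedTree_update_self fun v => ?_⟩
  obtain ⟨k, hk⟩ := hh.2 v
  exact ⟨n + k, by rw [iterate_add_apply, hk]⟩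

/-- The root `a` of `f` is recovered from `update f a z` as the predecessor of `z` on its cycle. -/
theorem IsRootedTree.eq_of_update_eq {g : Z → Z} {b : Z} (hf : IsRootedTree f a)
    (hg : IsRootedTree g b) (he : update f a z = update g b z) : a = b ∧ f = g := by
  obtain ⟨m, hm⟩ := (hf.2 z).elim fun _ hk => exists_iterate_update_eq z hk
  obtain ⟨n, hn⟩ := (hg.2 z).elim fun _ hk => exists_iterate_update_eq z hk
  rw [he] at hm
  have hab : a = b :=
    calc a = (update g b z)^[m] z := hm.symm
      _ = (update g b z)^[n] z := iterate_eq_iterate_of_apply_eq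
        (by rw [hm, ← he, update_self]) (by rw [hn, update_self])
      _ = b := hn
  subst hab
  refine ⟨rfl, funext fun x => ?_⟩
  by_cases hx : x = a
  · rw [hx, hf.1, hg.1]
  · simpa only [update_of_ne hx] using congrFun he x

end RootedMaps

section TreeWeights

open Classical in
noncomputable def treeWeight {Z R : Type*} [Fintype Z] [DecidableEq Z] [CommSemiring R]
    (P : Matrix Z Z R) (r : Z) : R :=
  ∑ f : Z → Z with IsRootedTree f r, ∏ v ∈ univ.erase r, P v (f v)

open Classical in
noncomputable def unicycleWeight {Z R : Type*} [Fintype Z] [CommSemiring R]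
    (P : Matrix Z Z R) (r : Z) : R :=
  ∑ h : Z → Z with IsRootedUnicycle h r, ∏ v, P v (h v)

variable {Z R : Type*} [Fintype Z] [DecidableEq Z] [CommSemiring R] (P : Matrix Z Z R)

theorem prod_apply_update (f : Z → Z) (a c : Z) :
    ∏ v, P v (update f a c v) = (∏ v ∈ univ.erase a, P v (f v)) * P a c := by
  simp_rw [apply_update (fun v => P v), prod_update_of_mem (mem_univ a), sdiff_singleton_eq_erase,
    mul_comm]

theorem treeWeight_mul_sum_erase (z : Z) :
    treeWeight P z * ∑ c ∈ univ.erase z, P z c = unicycleWeight P z := by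
  rw [treeWeight, unicycleWeight, sum_mul_sum, ← sum_product']
  refine sum_bij' (fun p _ => update p.1 z p.2) (fun h _ => (update h z z, h z)) ?_ ?_ ?_ ?_ ?_
  · simp only [mem_product, mem_filter, mem_univ, true_and, mem_erase, and_imp, Prod.forall]
    exact fun f c hf hc _ => hf.isRootedUnicycle_update_root hc
  · simp only [mem_filter, mem_univ, true_and, mem_product, mem_erase, ne_eq, and_true]
    exact fun h hh => ⟨isRootedTree_update_self hh.2, hh.1⟩
  · simp only [mem_product, mem_filter, mem_univ, true_and, Prod.forall, Prod.mk.injEq,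
      update_idem, update_self, and_true, and_imp]
    exact fun f c hf _ => update_eq_self_iff.2 hf.1.symm
  · intro h _
    simp only [update_idem, update_eq_self]
  · rintro ⟨f, c⟩ -
    rw [prod_apply_update]

theorem sum_erase_treeWeight_mul (z : Z) :
    ∑ a ∈ univ.erase z, treeWeight P a * P a z = unicycleWeight P z := by
  simp_rw [treeWeight, unicycleWeight, sum_mul, sum_sigma']
  refine sum_bij (fun p _ => update p.2 p.1 z) ?_ ?_ ?_ ?_
  · simp only [mem_sigma, mem_erase, mem_univ, and_true, mem_filter, true_and]
    exact fun p hp => hp.2.isRootedUnicycle_update hp.1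
  · rintro ⟨a, f⟩ hp ⟨b, g⟩ hq he
    simp only [mem_sigma, mem_filter, mem_univ, true_and] at hp hq
    obtain ⟨rfl, rfl⟩ := hp.2.eq_of_update_eq hq.2 he
    rfl
  · simp only [mem_filter, mem_univ, true_and, mem_sigma, mem_erase, ne_eq, and_true]
    intro h hh
    obtain ⟨a, ha, hpred, htree⟩ := hh.exists_pred
    refine ⟨⟨a, update h a a⟩, ⟨ha, htree⟩, ?_⟩
    rw [update_idem, ← hpred, update_eq_self]
  · rintro ⟨a, f⟩ -
    rw [prod_apply_update]

theorem sum_treeWeight_mul (z : Z) :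
    ∑ a, treeWeight P a * P a z = treeWeight P z * ∑ c, P z c := by
  rw [← add_sum_erase _ _ (mem_univ z), ← add_sum_erase _ _ (mem_univ z), mul_add,
    sum_erase_treeWeight_mul, treeWeight_mul_sum_erase]

end TreeWeights

open Classical in
theorem markov_chain_tree_theorem_general {Z : Type*} [Fintype Z] [DecidableEq Z]
    (P : Matrix Z Z ℝ)
    (hP1 : ∀ z, ∑ z', P z z' = 1)
    (Q : Z → ℝ)
    (hQ : ∀ z, Q z = ∑ f : Z → Z,
      if (f z = z ∧ ∀ z', ∃ n : ℕ, f^[n] z' = z) then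
        ∏ z' ∈ Finset.univ.erase z, P z' (f z')
      else 0) :
    ∀ z, ∑ z', (Q z' / ∑ z'', Q z'') * P z' z = Q z / ∑ z'', Q z'' := by
  have hQ_eq : Q = treeWeight P := funext fun z => by
    rw [hQ, treeWeight, sum_filter]
    exact sum_congr rfl fun f _ => if_congr Iff.rfl rfl rfl
  intro z
  have balance : ∑ a, Q a * P a z = Q z := by rw [hQ_eq, sum_treeWeight_mul, hP1, mul_one]
  simp_rw [div_mul_eq_mul_div, ← sum_div, balance]

open Classical in
/-- Markov chain tree theorem (Freidlin–Wentzell): the tree-weights `Q` normalize to a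
stationary distribution of an irreducible finite Markov chain. -/
theorem markov_chain_tree_theorem {Z : Type*} [Fintype Z] [DecidableEq Z] [Nonempty Z]
    (P : Matrix Z Z ℝ)
    (hP0 : ∀ z z', 0 ≤ P z z') (hP1 : ∀ z, ∑ z', P z z' = 1)
    (hirr : ∀ z z', ∃ n : ℕ, 0 < (P ^ n) z z')
    (Q : Z → ℝ)
    (hQ : ∀ z, Q z = ∑ f : Z → Z,
      if (f z = z ∧ ∀ z', ∃ n : ℕ, f^[n] z' = z) then
        ∏ z' ∈ Finset.univ.erase z, P z' (f z')
      else 0) :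
    ∀ z, ∑ z', (Q z' / ∑ z'', Q z'') * P z' z = Q z / ∑ z'', Q z'' :=
  markov_chain_tree_theorem_general P hP1 Q hQ
end
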